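/- arXiv:1901.02209 — 3 statements merged into one kernel-verified Lean document; each statement's English description precedes it below -/
import Mathlib

section
/- Let G be a chordal graph with terminal set T ⊆ V(G), let k be a nonnegative integer, and let t ∈ T be a simplicial vertex of G with closed neighbourhood N[t] = {t, x, y, z} of size four. Then G has a subset feedback vertex set with respect to T of size at most k if and only if G has a subset feedback vertex set S with respect to T of size at most k such that either t ∉ S, or t ∈ S and none of x, y, z belongs to S. -/
open SimpleGraph

variable {V : Type*}

/-- A `T`-triangle, represented as its vertex set: three pairwise adjacent
vertices at least one of which is a terminal. -/
def IsTTriangle (G : SimpleGraph V) (T Δ : Set V) : Prop :=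
  ∃ a b c : V, Δ = {a, b, c} ∧ G.Adj a b ∧ G.Adj a c ∧ G.Adj b c ∧
    (a ∈ T ∨ b ∈ T ∨ c ∈ T)

/-- The induced subgraph `G − S` contains a `T`-triangle. -/
def HasTTriangleAvoiding (G : SimpleGraph V) (T S : Set V) : Prop :=
  ∃ Δ : Set V, IsTTriangle G T Δ ∧ Δ ∩ S = ∅

/-- The induced subgraph `G − S` contains a `T`-cycle: a cycle of `G` avoiding
`S` and passing through a vertex of `T`. -/
def HasTCycleAvoiding (G : SimpleGraph V) (T S : Set V) : Prop :=
  ∃ (v : V) (c : G.Walk v v), c.IsCycle ∧ (∀ x ∈ c.support, x ∉ S) ∧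
    ∃ t ∈ T, t ∈ c.support

/-- `S` is a subset feedback vertex set of `G` with respect to `T`:
`G − S` contains no `T`-cycle. -/
def IsSubsetFVS (G : SimpleGraph V) (T S : Set V) : Prop :=
  ¬ HasTCycleAvoiding G T S

/-- A cycle has a chord: an edge of `G` between two vertices of the cycle
which is not an edge of the cycle. -/
def WalkHasChord (G : SimpleGraph V) {v : V} (c : G.Walk v v) : Prop :=
  ∃ x y : V, x ∈ c.support ∧ y ∈ c.support ∧ G.Adj x y ∧ s(x, y) ∉ c.edges

/-- A graph is chordal if every cycle of length at least four has a chord. -/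
def Chordal (G : SimpleGraph V) : Prop :=
  ∀ (v : V) (c : G.Walk v v), c.IsCycle → 4 ≤ c.length → WalkHasChord G c

/-- A bridge: an edge lying on no cycle of the graph. -/
def IsBridgeEdge (G : SimpleGraph V) (e : Sym2 V) : Prop :=
  e ∈ G.edgeSet ∧ ∀ (v : V) (c : G.Walk v v), c.IsCycle → e ∉ c.edges

/-- `(K, I)` is a split partition of `G`: `K` is a clique, `I` an independent
set, and they partition the vertex set. -/
def IsSplitPartition (G : SimpleGraph V) (K I : Set V) : Prop :=
  K ∪ I = Set.univ ∧ K ∩ I = ∅ ∧ G.IsClique K ∧ I.Pairwise fun a b => ¬ G.Adj a b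

/-- The closed neighbourhood `N[v]` of a vertex. -/
def closedNbhd (G : SimpleGraph V) (v : V) : Set V := insert v (G.neighborSet v)

/-- A vertex is simplicial if its closed neighbourhood is a clique. -/
def IsSimplicial (G : SimpleGraph V) (v : V) : Prop := G.IsClique (closedNbhd G v)

/-- A maximal clique. -/
def IsMaxClique (G : SimpleGraph V) (C : Set V) : Prop :=
  G.IsClique C ∧ ∀ C' : Set V, G.IsClique C' → C ⊆ C' → C' = C

/-- A matching, as a set of edges of `G` no two of which share an endvertex. -/
def IsEdgeMatching (G : SimpleGraph V) (M : Set (Sym2 V)) : Prop :=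
  M ⊆ G.edgeSet ∧ ∀ e ∈ M, ∀ f ∈ M, e ≠ f → ∀ z : V, z ∈ e → z ∉ f

/-- A set of edges saturates a vertex if some edge of it is incident with it. -/
def Saturates (M : Set (Sym2 V)) (z : V) : Prop := ∃ e ∈ M, z ∈ e

/-- `M` is a `t`-expansion of `X` into `Y`: every edge of `M` goes between `X`
and `Y`, every vertex of `X` is incident with exactly `t` edges of `M`, and the
edges of `M` are incident with exactly `t * |X|` distinct vertices of `Y`. -/
def IsExpansion (G : SimpleGraph V) (t : ℕ) (X Y : Set V) (M : Set (Sym2 V)) : Prop :=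
  M ⊆ G.edgeSet ∧ (∀ e ∈ M, ∃ x ∈ X, ∃ y ∈ Y, e = s(x, y)) ∧
    (∀ x ∈ X, {e ∈ M | x ∈ e}.ncard = t) ∧
    {y ∈ Y | Saturates M y}.ncard = t * X.ncard

/-! If a solution `S` contains `t` and one of `x, y, z`, then at most two neighbours of `t`
lie outside `S`. Exchanging `t` for one of them (or just dropping `t` if there is none) does
not increase the size and leaves at most one neighbour of `t` outside the new solution, so no
cycle of the remaining graph passes through `t`; cycles avoiding `t` already met `S`. -/

theorem Set.encard_triple_sdiff_le_two {α : Type*} {x y z : α} {S : Set α}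
    (h : x ∈ S ∨ y ∈ S ∨ z ∈ S) : ({x, y, z} \ S).encard ≤ 2 := by
  have hpair (a b : α) : ({a, b} : Set α).encard ≤ 2 :=
    (Set.encard_insert_le _ _).trans (by rw [Set.encard_singleton]; rfl)
  rcases h with h | h | h
  · exact (Set.encard_le_encard fun w hw => by grind).trans (hpair y z)
  · exact (Set.encard_le_encard fun w hw => by grind).trans (hpair x z)
  · exact (Set.encard_le_encard fun w hw => by grind).trans (hpair x y)

section

variable {G : SimpleGraph V} {T S S' : Set V} {t : V}

theorem IsSubsetFVS.of_sdiff_singleton_subset (hS : IsSubsetFVS G T S) (hsub : S \ {t} ⊆ S')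
    (hnb : (G.neighborSet t \ S').Subsingleton) : IsSubsetFVS G T S' := by
  rintro ⟨v, c, hc, havoid, u, huT, huc⟩
  by_cases htc : t ∈ c.support
  · obtain ⟨a, b, hab, hnbr⟩ := Set.ncard_eq_two.mp (hc.ncard_neighborSet_toSubgraph_eq_two htc)
    have hcnb : c.toSubgraph.neighborSet t ⊆ G.neighborSet t \ S' := fun w hw =>
      ⟨hw.adj_sub, havoid w (c.mem_verts_toSubgraph.mp hw.snd_mem)⟩
    exact hab (hnb.anti hcnb (by simp [hnbr]) (by simp [hnbr]))
  · refine hS ⟨v, c, hc, fun w hw hwS => havoid w hw (hsub ⟨hwS, ?_⟩), u, huT, huc⟩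
    rintro rfl
    exact htc hw

theorem SimpleGraph.neighborSet_sdiff_sdiff_singleton (G : SimpleGraph V) (S : Set V) (t : V) :
    G.neighborSet t \ (S \ {t}) = G.neighborSet t \ S := by
  ext w
  simp only [Set.mem_sdiff, Set.mem_singleton_iff, mem_neighborSet]
  grind [G.ne_of_adj]

theorem IsSubsetFVS.exists_ncard_le_notMem (hS : IsSubsetFVS G T S) (htS : t ∈ S)
    (hdeg : (G.neighborSet t \ S).encard ≤ 2) :
    ∃ S', IsSubsetFVS G T S' ∧ S'.ncard ≤ S.ncard ∧ t ∉ S' := by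
  rcases (G.neighborSet t \ S).eq_empty_or_nonempty with hempty | ⟨b, hbN, hbS⟩
  · refine ⟨S \ {t}, hS.of_sdiff_singleton_subset subset_rfl ?_, Set.ncard_sdiff_singleton_le S t,
      fun h => h.2 rfl⟩
    rw [G.neighborSet_sdiff_sdiff_singleton, hempty]
    exact Set.subsingleton_empty
  · refine ⟨insert b (S \ {t}), hS.of_sdiff_singleton_subset (Set.subset_insert _ _) ?_,
      (Set.ncard_exchange hbS htS).le, ?_⟩
    · have hsub : G.neighborSet t \ insert b (S \ {t}) ⊆ (G.neighborSet t \ S) \ {b} := by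
        intro w
        simp only [Set.mem_sdiff, Set.mem_insert_iff, Set.mem_singleton_iff, mem_neighborSet]
        grind [G.ne_of_adj]
      refine (Set.encard_le_one_iff_subsingleton.mp ?_).anti hsub
      rw [← ENat.add_le_add_iff_right ENat.one_ne_top,
        Set.encard_sdiff_singleton_add_one (Set.mem_sdiff_of_mem hbN hbS)]
      exact hdeg
    · rintro (h | h)
      · exact G.irrefl (h ▸ hbN)
      · exact h.2 rfl

end

theorem stmt15_general {V : Type} (G : SimpleGraph V) (T : Set V) (k : ℕ) (t x y z : V)
    (hC : closedNbhd G t = {t, x, y, z}) :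
    (∃ S : Set V, IsSubsetFVS G T S ∧ S.ncard ≤ k) ↔
    (∃ S : Set V, IsSubsetFVS G T S ∧ S.ncard ≤ k ∧
      (t ∉ S ∨ (t ∈ S ∧ x ∉ S ∧ y ∉ S ∧ z ∉ S))) := by
  refine ⟨fun ⟨S, hS, hk⟩ => ?_, fun ⟨S, hS, hk, _⟩ => ⟨S, hS, hk⟩⟩
  by_cases hgood : t ∉ S ∨ (t ∈ S ∧ x ∉ S ∧ y ∉ S ∧ z ∉ S)
  · exact ⟨S, hS, hk, hgood⟩
  have htS : t ∈ S := by tauto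
  have hxyz : x ∈ S ∨ y ∈ S ∨ z ∈ S := by tauto
  have hN : G.neighborSet t ⊆ {x, y, z} := fun w hw => by
    have hw' : w ∈ closedNbhd G t := Or.inr hw
    rw [hC] at hw'
    exact hw'.resolve_left (G.ne_of_adj hw).symm
  obtain ⟨S', hS', hle, htS'⟩ := hS.exists_ncard_le_notMem htS
    ((Set.encard_le_encard (Set.sdiff_subset_sdiff_left hN)).trans
      (Set.encard_triple_sdiff_le_two hxyz))
  exact ⟨S', hS', hle.trans hk, Or.inl htS'⟩

/-- existence of a solution of size at most `k` is equivalent to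
existence of one that either avoids `t` or contains `t` and none of its
neighbours `x, y, z`. -/
theorem stmt15 {V : Type} [Fintype V] (G : SimpleGraph V) (T : Set V)
    (hG : Chordal G) (k : ℕ) (t x y z : V) (ht : t ∈ T)
    (hsimp : IsSimplicial G t)
    (hC : closedNbhd G t = {t, x, y, z})
    (hcard : ({t, x, y, z} : Set V).ncard = 4) :
    (∃ S : Set V, IsSubsetFVS G T S ∧ S.ncard ≤ k) ↔
    (∃ S : Set V, IsSubsetFVS G T S ∧ S.ncard ≤ k ∧
      (t ∉ S ∨ (t ∈ S ∧ x ∉ S ∧ y ∉ S ∧ z ∉ S))) :=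
  stmt15_general G T k t x y z hC
end

section
/- Let G be a chordal graph with terminal set T ⊆ V(G), let k be a nonnegative integer, and let v be a simplicial vertex of G with v ∉ T whose closed neighbourhood is N[v] = {v, t, x, y} of size four, where t ∈ T and x, y ∉ T. If G has a subset feedback vertex set with respect to T of size at most k, then G has a subset feedback vertex set with respect to T of size at most k that does not contain v. -/
open SimpleGraph

variable {V : Type*}

/-! Swap `v` for `t` in a solution `S`. A `T`-cycle avoiding the new set passes through `v` (otherwise
it avoids `S`) but not through `t`. As `N[v]` is a clique, the two neighbours of `v` on the cycle are
adjacent, and the chord between them bypasses `v`, leaving a `T`-cycle that avoids `S`. This fails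
only when the cycle is a triangle inside `N[v] \ {t} = {v, x, y}`, which has no terminal. -/

theorem Set.ncard_insert_sdiff_singleton_le {α : Type*} {s : Set α} {a b : α} (hb : b ∈ s) :
    (insert a (s \ {b})).ncard ≤ s.ncard := by
  by_cases ha : a ∈ s
  · by_cases hab : a = b
    · rw [hab, Set.insert_sdiff_singleton, Set.insert_eq_of_mem hb]
    · rw [Set.insert_eq_of_mem (show a ∈ s \ {b} from ⟨ha, hab⟩)]
      exact Set.ncard_sdiff_singleton_le s b
  · exact (Set.ncard_exchange ha hb).le

namespace SimpleGraph.Walk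

variable {G : SimpleGraph V}

theorem IsPath.support_eq_pair_of_mem_edges {a w : V} {p : G.Walk a w} (hp : p.IsPath)
    (he : s(a, w) ∈ p.edges) : p.support = [a, w] := by
  cases p with
  | nil => simp at he
  | @cons _ b _ h q =>
    rw [edges_cons, List.mem_cons] at he
    rcases he with he | he
    · rcases Sym2.eq_iff.mp he with ⟨-, rfl⟩ | ⟨rfl, -⟩
      · obtain rfl := (isPath_iff_nil.mp hp.of_cons).eq_nil
        rfl
      · exact absurd rfl h.ne
    · exact absurd (q.fst_mem_support_of_mem_edges he) ((cons_isPath_iff h q).mp hp).2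

theorem IsCycle.support_subset_closedNbhd_or_exists_bypass_of_start {v : V}
    (hv : IsSimplicial G v) {c : G.Walk v v} (hc : c.IsCycle) :
    (∀ z ∈ c.support, z ∈ closedNbhd G v) ∨
      ∃ (u : V) (c' : G.Walk u u), c'.IsCycle ∧ ∀ z, z ∈ c'.support ↔ z ∈ c.support ∧ z ≠ v := by
  cases c with
  | nil => exact absurd rfl hc.ne_nil
  | @cons _ b _ hvb q =>
  cases q with
  | nil => exact (hvb.ne rfl).elim
  | cons hb q =>
  obtain ⟨w, p, hwv, hq⟩ := exists_cons_eq_concat hb q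
  rw [hq] at hc ⊢
  obtain ⟨hp, hvp⟩ := (concat_isPath_iff hwv).mp ((cons_isCycle_iff _ hvb).mp hc).1
  have hbw : b ≠ w := by
    rintro rfl
    have := hc.three_le_length
    rw [(isPath_iff_nil.mp hp).eq_nil] at this
    simp at this
  have hadj : G.Adj b w :=
    hv (Set.mem_insert_of_mem _ hvb) (Set.mem_insert_of_mem _ hwv.symm) hbw
  by_cases he : s(b, w) ∈ p.edges
  · left
    intro z hz
    rw [support_cons, support_concat, hp.support_eq_pair_of_mem_edges he] at hz
    simp only [List.cons_append, List.nil_append, List.mem_cons,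
      List.not_mem_nil, or_false] at hz
    rcases hz with rfl | rfl | rfl | rfl
    exacts [Set.mem_insert _ _, Set.mem_insert_of_mem _ hvb,
      Set.mem_insert_of_mem _ hwv.symm, Set.mem_insert _ _]
  · right
    refine ⟨b, cons hadj p.reverse, ?_, fun z => ?_⟩
    · exact (cons_isCycle_iff _ hadj).mpr ⟨hp.reverse, by simpa using he⟩
    · have := p.start_mem_support
      simp only [support_cons, support_concat, support_reverse, List.mem_cons, List.mem_reverse,
        List.mem_append]
      grind

theorem IsCycle.support_subset_closedNbhd_or_exists_bypass {u v : V}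
    (hv : IsSimplicial G v) {c : G.Walk u u} (hc : c.IsCycle) (hvc : v ∈ c.support) :
    (∀ z ∈ c.support, z ∈ closedNbhd G v) ∨
      ∃ (w : V) (c' : G.Walk w w), c'.IsCycle ∧ ∀ z, z ∈ c'.support ↔ z ∈ c.support ∧ z ≠ v := by
  classical
  simpa only [mem_support_rotate_iff] using
    (hc.rotate hvc).support_subset_closedNbhd_or_exists_bypass_of_start hv

end SimpleGraph.Walk

theorem stmt16_general {V : Type} (G : SimpleGraph V) (T : Set V)
    (k : ℕ) (v t x y : V) (hvT : v ∉ T)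
    (hsimp : IsSimplicial G v)
    (hC : closedNbhd G v = {v, t, x, y})
    (htT : t ∈ T) (hxT : x ∉ T) (hyT : y ∉ T)
    (hex : ∃ S : Set V, IsSubsetFVS G T S ∧ S.ncard ≤ k) :
    ∃ S : Set V, IsSubsetFVS G T S ∧ S.ncard ≤ k ∧ v ∉ S := by
  obtain ⟨S, hS, hSk⟩ := hex
  by_cases hvS : v ∈ S
  swap
  · exact ⟨S, hS, hSk, hvS⟩
  have hvt : v ≠ t := by rintro rfl; exact hvT htT
  refine ⟨insert t (S \ {v}), ?_, (Set.ncard_insert_sdiff_singleton_le hvS).trans hSk,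
    by simp [hvt]⟩
  rintro ⟨u, c, hc, hcS, τ, hτT, hτc⟩
  have havoid : ∀ z ∈ c.support, z ≠ v → z ∉ S := fun z hz hzv hzS =>
    hcS z hz (Set.mem_insert_of_mem _ ⟨hzS, hzv⟩)
  have hτv : τ ≠ v := by rintro rfl; exact hvT hτT
  by_cases hvc : v ∈ c.support
  · rcases hc.support_subset_closedNbhd_or_exists_bypass hsimp hvc with hN | ⟨w, c', hc', hsupp⟩
    · have hτt : τ ≠ t := by rintro rfl; exact hcS τ hτc (Set.mem_insert _ _)
      have := hN τ hτc
      rw [hC] at this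
      rcases this with rfl | rfl | rfl | rfl
      exacts [hτv rfl, hτt rfl, hxT hτT, hyT hτT]
    · refine hS ⟨w, c', hc', fun z hz => ?_, τ, hτT, (hsupp τ).mpr ⟨hτc, hτv⟩⟩
      exact havoid z ((hsupp z).mp hz).1 ((hsupp z).mp hz).2
  · exact hS ⟨u, c, hc, fun z hz => havoid z hz (ne_of_mem_of_not_mem hz hvc), τ, hτT, hτc⟩

/-- a non-terminal simplicial vertex `v` with simplicial clique
`{v, t, x, y}` (with `t` the unique terminal) can be avoided by some solution
of size at most `k`. -/
theorem stmt16 {V : Type} [Fintype V] (G : SimpleGraph V) (T : Set V)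
    (hG : Chordal G) (k : ℕ) (v t x y : V) (hvT : v ∉ T)
    (hsimp : IsSimplicial G v)
    (hC : closedNbhd G v = {v, t, x, y})
    (hcard : ({v, t, x, y} : Set V).ncard = 4)
    (htT : t ∈ T) (hxT : x ∉ T) (hyT : y ∉ T)
    (hex : ∃ S : Set V, IsSubsetFVS G T S ∧ S.ncard ≤ k) :
    ∃ S : Set V, IsSubsetFVS G T S ∧ S.ncard ≤ k ∧ v ∉ S :=
  stmt16_general G T k v t x y hvT hsimp hC htT hxT hyT hex
end

section
/- Let G be a chordal graph with terminal set T ⊆ V(G), and let v be a vertex of G with v ∉ T that has exactly one neighbour t belonging to T. If S is a subset feedback vertex set of G with respect to T containing v, then (S ∖ {v}) ∪ {t} is also a subset feedback vertex set of G with respect to T, of size at most |S|. -/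
open SimpleGraph

variable {V : Type*}

/-! In a chordal graph every cycle through a vertex `w` contains a triangle through `w`: a chord
splits a cycle of length at least four into two shorter cycles covering it. Hence a `T`-cycle
avoiding `(S \ {v}) ∪ {t}` yields a triangle through a terminal `w ≠ t` avoiding that set. The
triangle cannot contain `v`, since `w` would then be a terminal neighbour of `v` other than `t`;
so it is a `T`-cycle avoiding `S`. -/

namespace SimpleGraph.Walk

variable {G : SimpleGraph V} {u w x y : V}

lemma exists_triangle_of_length_eq_three {c : G.Walk w w} (h : c.length = 3) :
    ∃ a b, a ∈ c.support ∧ b ∈ c.support ∧ G.Adj w a ∧ G.Adj a b ∧ G.Adj b w := by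
  match c, h with
  | .cons h₁ (.cons h₂ (.cons h₃ .nil)), _ => exact ⟨_, _, by simp, by simp, h₁, h₂, h₃⟩

lemma IsCycle.exists_shorter_of_chord_at_start [DecidableEq V] {c : G.Walk x x}
    (hc : c.IsCycle) (hy : y ∈ c.support) (hxy : G.Adj x y) (hch : s(x, y) ∉ c.edges)
    (hw : w ∈ c.support) :
    ∃ (u : V) (c' : G.Walk u u), c'.IsCycle ∧ c'.length < c.length ∧
      c'.support ⊆ c.support ∧ w ∈ c'.support := by
  set p := c.takeUntil y hy
  set q := c.dropUntil y hy
  have hpq : p.append q = c := c.take_spec hy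
  have hc' : (p.append q).IsCycle := hpq ▸ hc
  have hp : p.IsPath := hc'.isPath_of_append_left fun h => hxy.ne h.eq.symm
  have hq : q.IsPath := hc'.isPath_of_append_right fun h => hxy.ne h.eq
  have hc₁ : (cons hxy.symm p).IsCycle := by
    refine (cons_isCycle_iff p hxy.symm).mpr ⟨hp, fun h => hch ?_⟩
    exact c.edges_takeUntil_subset_edges hy (Sym2.eq_swap ▸ h)
  have hc₂ : (cons hxy q).IsCycle :=
    (cons_isCycle_iff q hxy).mpr ⟨hq, fun h => hch (c.edges_dropUntil_subset_edges hy h)⟩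
  have hlen : c.length = p.length + q.length := by rw [← hpq, length_append]
  have h₁ := hc₁.three_le_length
  have h₂ := hc₂.three_le_length
  simp only [length_cons] at h₁ h₂
  rcases (mem_support_append_iff p q).mp (hpq ▸ hw) with hwp | hwq
  · refine ⟨y, cons hxy.symm p, hc₁, by simp only [length_cons]; omega, ?_, by simp [hwp]⟩
    rw [support_cons]
    exact List.cons_subset.mpr ⟨hy, c.support_takeUntil_subset_support hy⟩
  · refine ⟨x, cons hxy q, hc₂, by simp only [length_cons]; omega, ?_, by simp [hwq]⟩
    rw [support_cons]
    exact List.cons_subset.mpr ⟨c.start_mem_support, c.support_dropUntil_subset_support hy⟩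

lemma IsCycle.exists_shorter_of_hasChord {c : G.Walk u u} (hc : c.IsCycle)
    (hch : WalkHasChord G c) (hw : w ∈ c.support) :
    ∃ c' : G.Walk w w, c'.IsCycle ∧ c'.length < c.length ∧ c'.support ⊆ c.support := by
  classical
  obtain ⟨x, y, hx, hy, hxy, hxyc⟩ := hch
  have hmem (z : V) : z ∈ (c.rotate x hx).support ↔ z ∈ c.support := c.mem_support_rotate_iff x hx
  obtain ⟨u', c', hc', hlen, hsub, hw'⟩ := (hc.rotate hx).exists_shorter_of_chord_at_start
    ((hmem y).mpr hy) hxy (fun h => hxyc ((c.rotate_edges x hx).mem_iff.mp h)) ((hmem w).mpr hw)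
  refine ⟨c'.rotate w hw', hc'.rotate hw', by simpa using hlen, fun z hz => ?_⟩
  exact (hmem z).mp (hsub ((c'.mem_support_rotate_iff w hw').mp hz))

end SimpleGraph.Walk

open SimpleGraph.Walk in
theorem Chordal.exists_triangle_of_isCycle {G : SimpleGraph V} (hG : Chordal G) {w : V}
    {c : G.Walk w w} (hc : c.IsCycle) :
    ∃ a b, a ∈ c.support ∧ b ∈ c.support ∧ G.Adj w a ∧ G.Adj a b ∧ G.Adj b w := by
  induction hn : c.length using Nat.strong_induction_on generalizing c with
  | _ n ih =>
    rcases (hc.three_le_length).eq_or_lt with h3 | h4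
    · exact exists_triangle_of_length_eq_three h3.symm
    · obtain ⟨c', hc', hlen, hsub⟩ :=
        hc.exists_shorter_of_hasChord (hG w c hc h4) c.start_mem_support
      obtain ⟨a, b, ha, hb, hab⟩ := ih _ (hn ▸ hlen) hc' rfl
      exact ⟨a, b, hsub ha, hsub hb, hab⟩

lemma hasTCycleAvoiding_of_triangle {G : SimpleGraph V} {T S : Set V} {w a b : V}
    (hwa : G.Adj w a) (hab : G.Adj a b) (hbw : G.Adj b w) (hwT : w ∈ T)
    (hw : w ∉ S) (ha : a ∉ S) (hb : b ∉ S) : HasTCycleAvoiding G T S := by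
  refine ⟨w, .cons hwa (.cons hab (.cons hbw .nil)), ?_, ?_, w, hwT, by simp⟩
  · simp [Walk.cons_isCycle_iff, hwa.ne, hab.ne, hbw.ne, hwa.ne.symm, hbw.ne.symm]
  · simp [hw, ha, hb]

theorem Chordal.exists_terminal_triangle {G : SimpleGraph V} (hG : Chordal G) {T S : Set V}
    (h : HasTCycleAvoiding G T S) :
    ∃ w ∈ T, ∃ a b, G.Adj w a ∧ G.Adj a b ∧ G.Adj b w ∧ w ∉ S ∧ a ∉ S ∧ b ∉ S := by
  classical
  obtain ⟨u, c, hc, hS, w, hwT, hw⟩ := h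
  obtain ⟨a, b, ha, hb, hwa, hab, hbw⟩ := hG.exists_triangle_of_isCycle (hc.rotate hw)
  simp only [Walk.mem_support_rotate_iff] at ha hb
  exact ⟨w, hwT, a, b, hwa, hab, hbw, hS w hw, hS a ha, hS b hb⟩

theorem stmt19_general {V : Type} [Fintype V] (G : SimpleGraph V) (T : Set V)
    (hG : Chordal G) (v t : V) (hvT : v ∉ T)
    (huniq : ∀ u : V, G.Adj v u → u ∈ T → u = t)
    (S : Set V) (hS : IsSubsetFVS G T S) (hvS : v ∈ S) :
    IsSubsetFVS G T ((S \ {v}) ∪ {t}) ∧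
      ((S \ {v}) ∪ {t}).ncard ≤ S.ncard := by
  refine ⟨fun hcyc => ?_, ?_⟩
  · obtain ⟨w, hwT, a, b, hwa, hab, hbw, hw, ha, hb⟩ := hG.exists_terminal_triangle hcyc
    have hwt : w ≠ t := fun h => hw (Or.inr h)
    have hav : a ≠ v := by rintro rfl; exact hwt (huniq w hwa.symm hwT)
    have hbv : b ≠ v := by rintro rfl; exact hwt (huniq w hbw hwT)
    have hwv : w ≠ v := by rintro rfl; exact hvT hwT
    exact hS (hasTCycleAvoiding_of_triangle hwa hab hbw hwT (fun h => hw (Or.inl ⟨h, hwv⟩))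
      (fun h => ha (Or.inl ⟨h, hav⟩)) (fun h => hb (Or.inl ⟨h, hbv⟩)))
  · rw [Set.union_singleton]
    calc (insert t (S \ {v})).ncard ≤ (S \ {v}).ncard + 1 := Set.ncard_insert_le t _
      _ = S.ncard := Set.ncard_sdiff_singleton_add_one hvS

/-- a non-terminal vertex `v` with a unique terminal neighbour
`t` can be exchanged for `t` in any subset-FVS containing it. -/
theorem stmt19 {V : Type} [Fintype V] (G : SimpleGraph V) (T : Set V)
    (hG : Chordal G) (v t : V) (hvT : v ∉ T)
    (hadj : G.Adj v t) (htT : t ∈ T)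
    (huniq : ∀ u : V, G.Adj v u → u ∈ T → u = t)
    (S : Set V) (hS : IsSubsetFVS G T S) (hvS : v ∈ S) :
    IsSubsetFVS G T ((S \ {v}) ∪ {t}) ∧
      ((S \ {v}) ∪ {t}).ncard ≤ S.ncard :=
  stmt19_general G T hG v t hvT huniq S hS hvS
end
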